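/- arXiv:2404.16172 — 6 statements merged into one kernel-verified Lean document; each statement's English description precedes it below -/
import Mathlib

section
/- Let ℂ[X,Y,Z] be the polynomial ring in three variables over ℂ and let J be the principal ideal generated by XY − (XY² − 1)Z. In the quotient ring Q = ℂ[X,Y,Z]/J, the residue class of XY² − 1 is a unit, with inverse the residue class of YZ − 1. Moreover, there is a ℂ-algebra isomorphism from Q to the localization of the polynomial ring ℂ[X,Y] away from the element w = XY² − 1, sending the classes of X and Y to X and Y, and the class of Z to XY·w⁻¹. -/
/-!
Write `A = ℂ[X,Y]`, `a = XY` and `w = XY² − 1`, so that `Q = A[Z]/(a − wZ)`. Since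
`Y·a − w = 1`, the relation `wZ = a` gives `w·(YZ − 1) = Y·a − w = 1` in `Q`. Once `w` is a unit
in `A[Z]/(a − wZ)`, the map `Z ↦ a·w⁻¹` and the universal property of `A_w` are mutually inverse:
`A`-algebra maps out of `A_w` are unique, and `Z = a·w⁻¹` already holds in the quotient.
-/

open MvPolynomial

/-- The ideal `(XY − (XY² − 1)Z)` of `ℂ[X,Y,Z]`. -/
noncomputable def chartIdeal' : Ideal (MvPolynomial (Fin 3) ℂ) :=
  Ideal.span {X 0 * X 1 - (X 0 * (X 1) ^ 2 - 1) * X 2}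

/-- The element `w = XY² − 1` of `ℂ[X,Y]`. -/
noncomputable def wElt : MvPolynomial (Fin 2) ℂ := X 0 * (X 1) ^ 2 - 1

theorem Ideal.Quotient.mk_mul_mk_eq_one_of_mul_sub_eq_one {B : Type*} [CommRing B]
    {a w u z : B} (h : u * a - w = 1) :
    mk (span {a - w * z}) w * mk (span {a - w * z}) (u * z - 1) = 1 := by
  rw [← map_mul, ← map_one (mk _), Ideal.Quotient.mk_eq_mk_iff_sub_mem,
    mem_span_singleton']
  exact ⟨-u, by linear_combination -h⟩

namespace Polynomial

open Ideal.Quotient IsLocalization.Away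

variable {A : Type*} [CommRing A] (a w : A)

noncomputable def quotientSpanCSubCMulXToAway :
    (A[X] ⧸ Ideal.span {C a - C w * X}) →ₐ[A] Localization.Away w :=
  liftₐ _ (aeval (algebraMap A _ a * invSelf w)) fun p hp => by
    obtain ⟨q, rfl⟩ := Ideal.mem_span_singleton'.mp hp
    simp only [map_mul, map_sub, aeval_C, aeval_X]
    linear_combination -(aeval (algebraMap A (Localization.Away w) a * invSelf w) q *
      algebraMap A _ a) * mul_invSelf (S := Localization.Away w) w

@[simp]
theorem quotientSpanCSubCMulXToAway_mk_X :
    quotientSpanCSubCMulXToAway a w (mk _ X) = algebraMap A _ a * invSelf w :=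
  aeval_X _

@[simp]
theorem quotientSpanCSubCMulXToAway_mk_C (p : A) :
    quotientSpanCSubCMulXToAway a w (mk _ (C p)) = algebraMap A _ p :=
  aeval_C _ _

variable {a w}

theorem algebraMap_quotientSpanCSubCMulX_eq_mul_mk_X :
    algebraMap A (A[X] ⧸ Ideal.span {C a - C w * X}) a =
      algebraMap A _ w * mk _ X := by
  have := eq_zero_iff_mem.mpr (Ideal.mem_span_singleton_self (C a - C w * X))
  rw [map_sub, map_mul, sub_eq_zero] at this
  simpa [← mk_algebraMap] using this

noncomputable def quotientSpanCSubCMulXEquivAway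
    (hw : IsUnit (mk (Ideal.span {C a - C w * X}) (C w))) :
    (A[X] ⧸ Ideal.span {C a - C w * X}) ≃ₐ[A] Localization.Away w :=
  let L := liftAlgHom (S := Localization.Away w) w (f := Algebra.ofId A _) hw
  AlgEquiv.ofAlgHom (quotientSpanCSubCMulXToAway a w) L
    (Subsingleton.elim (h := IsLocalization.algHom_subsingleton (Submonoid.powers w)) _ _)
    (by
      refine Ideal.Quotient.algHom_ext _ (Polynomial.algHom_ext ?_)
      simp only [AlgHom.comp_apply, mkₐ_eq_mk, quotientSpanCSubCMulXToAway_mk_X, AlgHom.id_apply]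
      rw [map_mul, AlgHom.commutes, algebraMap_quotientSpanCSubCMulX_eq_mul_mk_X, mul_right_comm,
        ← L.commutes w, ← map_mul, mul_invSelf, map_one, one_mul])

end Polynomial

namespace MvPolynomial

variable (R : Type*) [CommRing R] (n : ℕ)

noncomputable def finSuccEquivLast :
    MvPolynomial (Fin (n + 1)) R ≃ₐ[R] Polynomial (MvPolynomial (Fin n) R) :=
  (renameEquiv R (finRotate (n + 1))).trans (finSuccEquiv R n)

variable {R n}

@[simp]
theorem finSuccEquivLast_X_last : finSuccEquivLast R n (X (Fin.last n)) = Polynomial.X := by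
  simp [finSuccEquivLast, finSuccEquiv_X_zero]

@[simp]
theorem finSuccEquivLast_X_castSucc (i : Fin n) :
    finSuccEquivLast R n (X i.castSucc) = Polynomial.C (X i) := by
  simp [finSuccEquivLast, finSuccEquiv_X_succ]

end MvPolynomial

@[simp]
theorem finSuccEquivLast_two_X_zero : finSuccEquivLast ℂ 2 (X 0) = Polynomial.C (X 0) :=
  finSuccEquivLast_X_castSucc 0

@[simp]
theorem finSuccEquivLast_two_X_one : finSuccEquivLast ℂ 2 (X 1) = Polynomial.C (X 1) :=
  finSuccEquivLast_X_castSucc 1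

@[simp]
theorem finSuccEquivLast_two_X_two : finSuccEquivLast ℂ 2 (X 2) = Polynomial.X :=
  finSuccEquivLast_X_last

theorem chartIdeal'_map_finSuccEquivLast :
    chartIdeal'.map (finSuccEquivLast ℂ 2) =
      Ideal.span {Polynomial.C (X 0 * X 1) - Polynomial.C wElt * Polynomial.X} := by
  simp [chartIdeal', Ideal.map_span, wElt]

theorem isUnit_mk_C_wElt :
    IsUnit (Ideal.Quotient.mk
      (Ideal.span {Polynomial.C (X 0 * X 1) - Polynomial.C wElt * Polynomial.X})
      (Polynomial.C wElt)) :=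
  (Units.mkOfMulEqOne _
    (Ideal.Quotient.mk _ (Polynomial.C (X 1 : MvPolynomial (Fin 2) ℂ) * Polynomial.X - 1)) <|
    Ideal.Quotient.mk_mul_mk_eq_one_of_mul_sub_eq_one <| by
      rw [← map_mul, ← map_sub, wElt, ← map_one Polynomial.C]; ring_nf).isUnit

/-- In `Q = ℂ[X,Y,Z]/(XY − (XY² − 1)Z)` the class of `XY² − 1` is a unit with inverse the
class of `YZ − 1`, and `Q` is isomorphic, as a `ℂ`-algebra, to the localization of `ℂ[X,Y]`
away from `w = XY² − 1`, via `X ↦ X`, `Y ↦ Y`, `Z ↦ XY·w⁻¹`. -/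
theorem chart_iso_localization :
    (Ideal.Quotient.mk chartIdeal' (X 0 * (X 1) ^ 2 - 1) *
        Ideal.Quotient.mk chartIdeal' (X 1 * X 2 - 1) = 1) ∧
    (Ideal.Quotient.mk chartIdeal' (X 1 * X 2 - 1) *
        Ideal.Quotient.mk chartIdeal' (X 0 * (X 1) ^ 2 - 1) = 1) ∧
    ∃ e : (MvPolynomial (Fin 3) ℂ ⧸ chartIdeal') ≃ₐ[ℂ] Localization.Away wElt,
      e (Ideal.Quotient.mk chartIdeal' (X 0)) =
        algebraMap (MvPolynomial (Fin 2) ℂ) (Localization.Away wElt) (X 0) ∧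
      e (Ideal.Quotient.mk chartIdeal' (X 1)) =
        algebraMap (MvPolynomial (Fin 2) ℂ) (Localization.Away wElt) (X 1) ∧
      e (Ideal.Quotient.mk chartIdeal' (X 2)) =
        algebraMap (MvPolynomial (Fin 2) ℂ) (Localization.Away wElt) (X 0 * X 1) *
          IsLocalization.Away.invSelf (S := Localization.Away wElt) wElt := by
  have hunit : Ideal.Quotient.mk chartIdeal' (X 0 * (X 1) ^ 2 - 1) *
      Ideal.Quotient.mk chartIdeal' (X 1 * X 2 - 1) = 1 :=
    Ideal.Quotient.mk_mul_mk_eq_one_of_mul_sub_eq_one (a := X 0 * X 1) (by ring)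
  let e := (Ideal.quotientEquivAlg _ _ (finSuccEquivLast ℂ 2)
    chartIdeal'_map_finSuccEquivLast.symm).trans
      ((Polynomial.quotientSpanCSubCMulXEquivAway isUnit_mk_C_wElt).restrictScalars ℂ)
  have he : ∀ p, e (Ideal.Quotient.mk _ p) =
      Polynomial.quotientSpanCSubCMulXToAway _ _ (Ideal.Quotient.mk _ (finSuccEquivLast ℂ 2 p)) :=
    fun _ => rfl
  refine ⟨hunit, mul_comm (Ideal.Quotient.mk chartIdeal' _) _ ▸ hunit, e, ?_, ?_, ?_⟩ <;>
    simp [he]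
end

section
/- Under the hypotheses of the doubled affine D₄ quiver package below, the elements X, Y, Z of the corner ring e₁Re₁ satisfy XY = YX and XY = ZX + Z (that is, XY = Z(X + e₁)). -/
/-- In the doubled affine `D₄` quiver package — a unital ring `R` with pairwise orthogonal
idempotents `e 0, …, e 4`, arrows `a₁, …, a₄`, `b₁, …, b₄` satisfying the preprojective
relations, a two-sided inverse `(α₁; α₂)` of the row matrix `(a₁ a₂)`, and corner inverses
`s₂, s₃, s₄` of `b₂a₁, b₃a₁, b₄a₁` — the elements
`X = s₂(α₂a₃)(b₃a₁)`, `Y = s₃(b₃a₂)(b₂a₁)`, `Z = s₄(b₄a₂)(b₂a₁)` of the corner ring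
`e₁Re₁` satisfy `XY = YX` and `XY = ZX + Z` (that is, `XY = Z(X + e₁)`). -/
theorem D4_chart_commutes (R : Type*) [Ring R] (e : Fin 5 → R)
    (hidem : ∀ k, e k * e k = e k) (horth : ∀ k l, k ≠ l → e k * e l = 0)
    (a₁ a₂ a₃ a₄ b₁ b₂ b₃ b₄ α₁ α₂ s₂ s₃ s₄ X Y Z : R)
    (ha₁ : a₁ = e 0 * a₁ * e 1) (ha₂ : a₂ = e 0 * a₂ * e 2)
    (ha₃ : a₃ = e 0 * a₃ * e 3) (ha₄ : a₄ = e 0 * a₄ * e 4)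
    (hb₁ : b₁ = e 1 * b₁ * e 0) (hb₂ : b₂ = e 2 * b₂ * e 0)
    (hb₃ : b₃ = e 3 * b₃ * e 0) (hb₄ : b₄ = e 4 * b₄ * e 0)
    (hpre : a₁ * b₁ + a₂ * b₂ + a₃ * b₃ + a₄ * b₄ = 0)
    (hba₁ : b₁ * a₁ = 0) (hba₂ : b₂ * a₂ = 0) (hba₃ : b₃ * a₃ = 0) (hba₄ : b₄ * a₄ = 0)
    (hα₁ : α₁ = e 1 * α₁ * e 0) (hα₂ : α₂ = e 2 * α₂ * e 0)
    (hsum : a₁ * α₁ + a₂ * α₂ = e 0)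
    (hα₁a₁ : α₁ * a₁ = e 1) (hα₂a₂ : α₂ * a₂ = e 2)
    (hα₁a₂ : α₁ * a₂ = 0) (hα₂a₁ : α₂ * a₁ = 0)
    (hs₂ : s₂ = e 1 * s₂ * e 2) (hs₂l : s₂ * (b₂ * a₁) = e 1) (hs₂r : (b₂ * a₁) * s₂ = e 2)
    (hs₃ : s₃ = e 1 * s₃ * e 3) (hs₃l : s₃ * (b₃ * a₁) = e 1) (hs₃r : (b₃ * a₁) * s₃ = e 3)
    (hs₄ : s₄ = e 1 * s₄ * e 4) (hs₄l : s₄ * (b₄ * a₁) = e 1) (hs₄r : (b₄ * a₁) * s₄ = e 4)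
    (hX : X = s₂ * (α₂ * a₃) * (b₃ * a₁))
    (hY : Y = s₃ * (b₃ * a₂) * (b₂ * a₁))
    (hZ : Z = s₄ * (b₄ * a₂) * (b₂ * a₁)) :
    X * Y = Y * X ∧ X * Y = Z * X + Z := by
  -- absorption helpers
  have absL : ∀ (i j : Fin 5) (x : R), x = e i * x * e j → e i * x = x := by
    intro i j x hx
    conv_lhs => rw [hx, ← mul_assoc, ← mul_assoc, hidem i]
    exact hx.symm
  have absR : ∀ (i j : Fin 5) (x : R), x = e i * x * e j → x * e j = x := by
    intro i j x hx
    conv_lhs => rw [hx, mul_assoc, hidem j]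
    exact hx.symm
  have ha₃L : e 0 * a₃ = a₃ := absL 0 3 a₃ ha₃
  have ha₄L : e 0 * a₄ = a₄ := absL 0 4 a₄ ha₄
  have hb₂L : e 2 * b₂ = b₂ := absL 2 0 b₂ hb₂
  have hb₃L : e 3 * b₃ = b₃ := absL 3 0 b₃ hb₃
  have hb₄L : e 4 * b₄ = b₄ := absL 4 0 b₄ hb₄
  have hα₁L : e 1 * α₁ = α₁ := absL 1 0 α₁ hα₁
  have hα₂L : e 2 * α₂ = α₂ := absL 2 0 α₂ hα₂
  have hs₃L : e 1 * s₃ = s₃ := absL 1 3 s₃ hs₃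
  have hs₄L : e 1 * s₄ = s₄ := absL 1 4 s₄ hs₄
  -- corner relations from bₖaₖ = 0 and the decomposition of e 0
  have E3 : b₃ * a₁ * (α₁ * a₃) + b₃ * a₂ * (α₂ * a₃) = 0 := by
    have hb₃R : b₃ * e 0 = b₃ := absR 3 0 b₃ hb₃
    have h : b₃ * a₁ * (α₁ * a₃) + b₃ * a₂ * (α₂ * a₃)
        = b₃ * ((a₁ * α₁ + a₂ * α₂) * a₃) := by noncomm_ring
    rw [hsum, ha₃L, hba₃] at h
    exact h
  have E4 : b₄ * a₁ * (α₁ * a₄) + b₄ * a₂ * (α₂ * a₄) = 0 := by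
    have hb₄R : b₄ * e 0 = b₄ := absR 4 0 b₄ hb₄
    have h : b₄ * a₁ * (α₁ * a₄) + b₄ * a₂ * (α₂ * a₄)
        = b₄ * ((a₁ * α₁ + a₂ * α₂) * a₄) := by noncomm_ring
    rw [hsum, ha₄L, hba₄] at h
    exact h
  -- sandwiches of the preprojective relation
  have S11 : α₁ * a₃ * (b₃ * a₁) + α₁ * a₄ * (b₄ * a₁) = 0 := by
    have h : α₁ * a₁ * (b₁ * a₁) + α₁ * a₂ * (b₂ * a₁) + α₁ * a₃ * (b₃ * a₁)
          + α₁ * a₄ * (b₄ * a₁)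
        = α₁ * ((a₁ * b₁ + a₂ * b₂ + a₃ * b₃ + a₄ * b₄) * a₁) := by noncomm_ring
    rw [hpre, hα₁a₂, hba₁] at h
    simpa using h
  have S21 : b₂ * a₁ + α₂ * a₃ * (b₃ * a₁) + α₂ * a₄ * (b₄ * a₁) = 0 := by
    have h : α₂ * a₁ * (b₁ * a₁) + α₂ * a₂ * (b₂ * a₁) + α₂ * a₃ * (b₃ * a₁)
          + α₂ * a₄ * (b₄ * a₁)
        = α₂ * ((a₁ * b₁ + a₂ * b₂ + a₃ * b₃ + a₄ * b₄) * a₁) := by noncomm_ring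
    rw [hpre, hα₂a₁, hα₂a₂] at h
    rw [show e 2 * (b₂ * a₁) = b₂ * a₁ from by rw [← mul_assoc, hb₂L]] at h
    simpa using h
  have S22 : α₂ * a₃ * (b₃ * a₂) + α₂ * a₄ * (b₄ * a₂) = 0 := by
    have h : α₂ * a₁ * (b₁ * a₂) + α₂ * a₂ * (b₂ * a₂) + α₂ * a₃ * (b₃ * a₂)
          + α₂ * a₄ * (b₄ * a₂)
        = α₂ * ((a₁ * b₁ + a₂ * b₂ + a₃ * b₃ + a₄ * b₄) * a₂) := by noncomm_ring
    rw [hpre, hα₂a₁, hba₂] at h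
    simpa using h
  -- consequences
  have F1 : s₃ * (b₃ * a₂) * (α₂ * a₃) + α₁ * a₃ = 0 := by
    have h : s₃ * (b₃ * a₁ * (α₁ * a₃) + b₃ * a₂ * (α₂ * a₃))
        = s₃ * (b₃ * a₁) * (α₁ * a₃) + s₃ * (b₃ * a₂) * (α₂ * a₃) := by noncomm_ring
    rw [E3, mul_zero, hs₃l] at h
    rw [show e 1 * (α₁ * a₃) = α₁ * a₃ from by rw [← mul_assoc, hα₁L]] at h
    rw [add_comm]
    exact h.symm
  have F2 : s₄ * (b₄ * a₂) * (α₂ * a₄) + α₁ * a₄ = 0 := by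
    have h : s₄ * (b₄ * a₁ * (α₁ * a₄) + b₄ * a₂ * (α₂ * a₄))
        = s₄ * (b₄ * a₁) * (α₁ * a₄) + s₄ * (b₄ * a₂) * (α₂ * a₄) := by noncomm_ring
    rw [E4, mul_zero, hs₄l] at h
    rw [show e 1 * (α₁ * a₄) = α₁ * a₄ from by rw [← mul_assoc, hα₁L]] at h
    rw [add_comm]
    exact h.symm
  have G1 : b₃ * a₁ * (s₃ * (b₃ * a₂)) = b₃ * a₂ := by
    calc b₃ * a₁ * (s₃ * (b₃ * a₂)) = b₃ * a₁ * s₃ * (b₃ * a₂) := by noncomm_ring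
      _ = e 3 * (b₃ * a₂) := by rw [hs₃r]
      _ = e 3 * b₃ * a₂ := by noncomm_ring
      _ = b₃ * a₂ := by rw [hb₃L]
  have G2 : b₄ * a₁ * (s₄ * (b₄ * a₂)) = b₄ * a₂ := by
    calc b₄ * a₁ * (s₄ * (b₄ * a₂)) = b₄ * a₁ * s₄ * (b₄ * a₂) := by noncomm_ring
      _ = e 4 * (b₄ * a₂) := by rw [hs₄r]
      _ = e 4 * b₄ * a₂ := by noncomm_ring
      _ = b₄ * a₂ := by rw [hb₄L]
  -- sign forms
  have f1 : s₃ * (b₃ * a₂) * (α₂ * a₃) = -(α₁ * a₃) := eq_neg_of_add_eq_zero_left F1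
  have f2 : s₄ * (b₄ * a₂) * (α₂ * a₄) = -(α₁ * a₄) := eq_neg_of_add_eq_zero_left F2
  have s11 : α₁ * a₃ * (b₃ * a₁) = -(α₁ * a₄ * (b₄ * a₁)) := eq_neg_of_add_eq_zero_left S11
  have s21 : α₂ * a₄ * (b₄ * a₁) = -(b₂ * a₁ + α₂ * a₃ * (b₃ * a₁)) :=
    eq_neg_of_add_eq_zero_left (by rw [add_comm]; exact S21)
  have s22 : α₂ * a₃ * (b₃ * a₂) = -(α₂ * a₄ * (b₄ * a₂)) := eq_neg_of_add_eq_zero_left S22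
  -- key identities: with t = s₃(b₃a₂), w = s₄(b₄a₂), P = α₂a₃(b₃a₁), q = b₂a₁
  -- K1 : t * P = w * (q + P)
  have K1 : s₃ * (b₃ * a₂) * (α₂ * a₃ * (b₃ * a₁))
      = s₄ * (b₄ * a₂) * (b₂ * a₁ + α₂ * a₃ * (b₃ * a₁)) := by
    calc s₃ * (b₃ * a₂) * (α₂ * a₃ * (b₃ * a₁))
        = s₃ * (b₃ * a₂) * (α₂ * a₃) * (b₃ * a₁) := by noncomm_ring
      _ = -(α₁ * a₃) * (b₃ * a₁) := by rw [f1]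
      _ = -(α₁ * a₃ * (b₃ * a₁)) := by noncomm_ring
      _ = α₁ * a₄ * (b₄ * a₁) := by rw [s11, neg_neg]
      _ = -(s₄ * (b₄ * a₂) * (α₂ * a₄)) * (b₄ * a₁) := by rw [f2, neg_neg]
      _ = -(s₄ * (b₄ * a₂) * (α₂ * a₄ * (b₄ * a₁))) := by noncomm_ring
      _ = -(s₄ * (b₄ * a₂) * -(b₂ * a₁ + α₂ * a₃ * (b₃ * a₁))) := by rw [s21]
      _ = s₄ * (b₄ * a₂) * (b₂ * a₁ + α₂ * a₃ * (b₃ * a₁)) := by noncomm_ring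
  -- K2 : P * t = (q + P) * w
  have K2 : α₂ * a₃ * (b₃ * a₁) * (s₃ * (b₃ * a₂))
      = (b₂ * a₁ + α₂ * a₃ * (b₃ * a₁)) * (s₄ * (b₄ * a₂)) := by
    calc α₂ * a₃ * (b₃ * a₁) * (s₃ * (b₃ * a₂))
        = α₂ * a₃ * (b₃ * a₁ * (s₃ * (b₃ * a₂))) := by noncomm_ring
      _ = α₂ * a₃ * (b₃ * a₂) := by rw [G1]
      _ = -(α₂ * a₄ * (b₄ * a₂)) := s22
      _ = -(α₂ * a₄ * (b₄ * a₁ * (s₄ * (b₄ * a₂)))) := by rw [G2]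
      _ = -(α₂ * a₄ * (b₄ * a₁)) * (s₄ * (b₄ * a₂)) := by noncomm_ring
      _ = (b₂ * a₁ + α₂ * a₃ * (b₃ * a₁)) * (s₄ * (b₄ * a₂)) := by rw [s21, neg_neg]
  -- K3 : q * (t * P) = (P * t) * q, by expanding (q+P) t P = P t (q+P)
  have K3 : b₂ * a₁ * (s₃ * (b₃ * a₂) * (α₂ * a₃ * (b₃ * a₁)))
      = α₂ * a₃ * (b₃ * a₁) * (s₃ * (b₃ * a₂)) * (b₂ * a₁) := by
    have h1 : (b₂ * a₁ + α₂ * a₃ * (b₃ * a₁)) * (s₃ * (b₃ * a₂) * (α₂ * a₃ * (b₃ * a₁)))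
        = α₂ * a₃ * (b₃ * a₁) * (s₃ * (b₃ * a₂)) * (b₂ * a₁ + α₂ * a₃ * (b₃ * a₁)) := by
      calc (b₂ * a₁ + α₂ * a₃ * (b₃ * a₁)) * (s₃ * (b₃ * a₂) * (α₂ * a₃ * (b₃ * a₁)))
          = (b₂ * a₁ + α₂ * a₃ * (b₃ * a₁))
              * (s₄ * (b₄ * a₂) * (b₂ * a₁ + α₂ * a₃ * (b₃ * a₁))) := by rw [K1]
        _ = (b₂ * a₁ + α₂ * a₃ * (b₃ * a₁)) * (s₄ * (b₄ * a₂))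
              * (b₂ * a₁ + α₂ * a₃ * (b₃ * a₁)) := by noncomm_ring
        _ = α₂ * a₃ * (b₃ * a₁) * (s₃ * (b₃ * a₂))
              * (b₂ * a₁ + α₂ * a₃ * (b₃ * a₁)) := by rw [← K2]
    have h2 : b₂ * a₁ * (s₃ * (b₃ * a₂) * (α₂ * a₃ * (b₃ * a₁)))
          + α₂ * a₃ * (b₃ * a₁) * (s₃ * (b₃ * a₂)) * (α₂ * a₃ * (b₃ * a₁))
        = α₂ * a₃ * (b₃ * a₁) * (s₃ * (b₃ * a₂)) * (b₂ * a₁)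
          + α₂ * a₃ * (b₃ * a₁) * (s₃ * (b₃ * a₂)) * (α₂ * a₃ * (b₃ * a₁)) := by
      calc b₂ * a₁ * (s₃ * (b₃ * a₂) * (α₂ * a₃ * (b₃ * a₁)))
            + α₂ * a₃ * (b₃ * a₁) * (s₃ * (b₃ * a₂)) * (α₂ * a₃ * (b₃ * a₁))
          = (b₂ * a₁ + α₂ * a₃ * (b₃ * a₁))
              * (s₃ * (b₃ * a₂) * (α₂ * a₃ * (b₃ * a₁))) := by noncomm_ring
        _ = α₂ * a₃ * (b₃ * a₁) * (s₃ * (b₃ * a₂))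
              * (b₂ * a₁ + α₂ * a₃ * (b₃ * a₁)) := h1
        _ = α₂ * a₃ * (b₃ * a₁) * (s₃ * (b₃ * a₂)) * (b₂ * a₁)
              + α₂ * a₃ * (b₃ * a₁) * (s₃ * (b₃ * a₂)) * (α₂ * a₃ * (b₃ * a₁)) := by
            noncomm_ring
    exact add_right_cancel h2
  -- Y*X = t*P
  have N1 : s₃ * (b₃ * a₂) * (b₂ * a₁) * (s₂ * (α₂ * a₃) * (b₃ * a₁))
      = s₃ * (b₃ * a₂) * (α₂ * a₃ * (b₃ * a₁)) := by
    calc s₃ * (b₃ * a₂) * (b₂ * a₁) * (s₂ * (α₂ * a₃) * (b₃ * a₁))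
        = s₃ * (b₃ * a₂) * (b₂ * a₁ * s₂ * (α₂ * a₃ * (b₃ * a₁))) := by noncomm_ring
      _ = s₃ * (b₃ * a₂) * (e 2 * (α₂ * a₃ * (b₃ * a₁))) := by rw [hs₂r]
      _ = s₃ * (b₃ * a₂) * (e 2 * α₂ * (a₃ * (b₃ * a₁))) := by noncomm_ring
      _ = s₃ * (b₃ * a₂) * (α₂ * (a₃ * (b₃ * a₁))) := by rw [hα₂L]
      _ = s₃ * (b₃ * a₂) * (α₂ * a₃ * (b₃ * a₁)) := by noncomm_ring
  -- X*Y = t*P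
  have N2 : s₂ * (α₂ * a₃) * (b₃ * a₁) * (s₃ * (b₃ * a₂) * (b₂ * a₁))
      = s₃ * (b₃ * a₂) * (α₂ * a₃ * (b₃ * a₁)) := by
    calc s₂ * (α₂ * a₃) * (b₃ * a₁) * (s₃ * (b₃ * a₂) * (b₂ * a₁))
        = s₂ * (α₂ * a₃ * (b₃ * a₁) * (s₃ * (b₃ * a₂)) * (b₂ * a₁)) := by noncomm_ring
      _ = s₂ * (b₂ * a₁ * (s₃ * (b₃ * a₂) * (α₂ * a₃ * (b₃ * a₁)))) := by rw [← K3]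
      _ = s₂ * (b₂ * a₁) * s₃ * ((b₃ * a₂) * (α₂ * a₃ * (b₃ * a₁))) := by noncomm_ring
      _ = e 1 * s₃ * ((b₃ * a₂) * (α₂ * a₃ * (b₃ * a₁))) := by rw [hs₂l]
      _ = s₃ * ((b₃ * a₂) * (α₂ * a₃ * (b₃ * a₁))) := by rw [hs₃L]
      _ = s₃ * (b₃ * a₂) * (α₂ * a₃ * (b₃ * a₁)) := by noncomm_ring
  -- Z*X + Z = w*(q+P)
  have N3 : s₄ * (b₄ * a₂) * (b₂ * a₁) * (s₂ * (α₂ * a₃) * (b₃ * a₁))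
        + s₄ * (b₄ * a₂) * (b₂ * a₁)
      = s₄ * (b₄ * a₂) * (b₂ * a₁ + α₂ * a₃ * (b₃ * a₁)) := by
    calc s₄ * (b₄ * a₂) * (b₂ * a₁) * (s₂ * (α₂ * a₃) * (b₃ * a₁))
          + s₄ * (b₄ * a₂) * (b₂ * a₁)
        = s₄ * (b₄ * a₂) * (b₂ * a₁ * s₂ * (α₂ * a₃ * (b₃ * a₁)))
          + s₄ * (b₄ * a₂) * (b₂ * a₁) := by noncomm_ring
      _ = s₄ * (b₄ * a₂) * (e 2 * (α₂ * a₃ * (b₃ * a₁)))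
          + s₄ * (b₄ * a₂) * (b₂ * a₁) := by rw [hs₂r]
      _ = s₄ * (b₄ * a₂) * (e 2 * α₂ * (a₃ * (b₃ * a₁)))
          + s₄ * (b₄ * a₂) * (b₂ * a₁) := by noncomm_ring
      _ = s₄ * (b₄ * a₂) * (α₂ * (a₃ * (b₃ * a₁)))
          + s₄ * (b₄ * a₂) * (b₂ * a₁) := by rw [hα₂L]
      _ = s₄ * (b₄ * a₂) * (b₂ * a₁ + α₂ * a₃ * (b₃ * a₁)) := by noncomm_ring
  constructor
  · rw [hX, hY]
    exact N2.trans N1.symm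
  · rw [hX, hY, hZ]
    exact N2.trans (K1.trans N3.symm)
end

section
/- Under the hypotheses of the doubled affine D₄ quiver package below, one has the identity (α₁ a₃)(b₃ a₂)(b₂ a₁) = −X·Y·Y (that is, the transition element for the second chart equals −XY²). -/
/-- In the doubled affine `D₄` quiver package — a unital ring `R` with pairwise orthogonal
idempotents `e 0, …, e 4`, arrows `a₁, …, a₄`, `b₁, …, b₄` satisfying the preprojective
relations, a two-sided inverse `(α₁; α₂)` of the row matrix `(a₁ a₂)`, and corner inverses
`s₂, s₃, s₄` of `b₂a₁, b₃a₁, b₄a₁` — the elements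
`X = s₂(α₂a₃)(b₃a₁)`, `Y = s₃(b₃a₂)(b₂a₁)`, `Z = s₄(b₄a₂)(b₂a₁)` of the corner ring
`e₁Re₁` satisfy the transition identity `(α₁a₃)(b₃a₂)(b₂a₁) = −XY²`. -/
theorem D4_transition_element (R : Type*) [Ring R] (e : Fin 5 → R)
    (hidem : ∀ k, e k * e k = e k) (horth : ∀ k l, k ≠ l → e k * e l = 0)
    (a₁ a₂ a₃ a₄ b₁ b₂ b₃ b₄ α₁ α₂ s₂ s₃ s₄ X Y Z : R)
    (ha₁ : a₁ = e 0 * a₁ * e 1) (ha₂ : a₂ = e 0 * a₂ * e 2)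
    (ha₃ : a₃ = e 0 * a₃ * e 3) (ha₄ : a₄ = e 0 * a₄ * e 4)
    (hb₁ : b₁ = e 1 * b₁ * e 0) (hb₂ : b₂ = e 2 * b₂ * e 0)
    (hb₃ : b₃ = e 3 * b₃ * e 0) (hb₄ : b₄ = e 4 * b₄ * e 0)
    (hpre : a₁ * b₁ + a₂ * b₂ + a₃ * b₃ + a₄ * b₄ = 0)
    (hba₁ : b₁ * a₁ = 0) (hba₂ : b₂ * a₂ = 0) (hba₃ : b₃ * a₃ = 0) (hba₄ : b₄ * a₄ = 0)
    (hα₁ : α₁ = e 1 * α₁ * e 0) (hα₂ : α₂ = e 2 * α₂ * e 0)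
    (hsum : a₁ * α₁ + a₂ * α₂ = e 0)
    (hα₁a₁ : α₁ * a₁ = e 1) (hα₂a₂ : α₂ * a₂ = e 2)
    (hα₁a₂ : α₁ * a₂ = 0) (hα₂a₁ : α₂ * a₁ = 0)
    (hs₂ : s₂ = e 1 * s₂ * e 2) (hs₂l : s₂ * (b₂ * a₁) = e 1) (hs₂r : (b₂ * a₁) * s₂ = e 2)
    (hs₃ : s₃ = e 1 * s₃ * e 3) (hs₃l : s₃ * (b₃ * a₁) = e 1) (hs₃r : (b₃ * a₁) * s₃ = e 3)
    (hs₄ : s₄ = e 1 * s₄ * e 4) (hs₄l : s₄ * (b₄ * a₁) = e 1) (hs₄r : (b₄ * a₁) * s₄ = e 4)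
    (hX : X = s₂ * (α₂ * a₃) * (b₃ * a₁))
    (hY : Y = s₃ * (b₃ * a₂) * (b₂ * a₁))
    (hZ : Z = s₄ * (b₄ * a₂) * (b₂ * a₁)) :
    (α₁ * a₃) * (b₃ * a₂) * (b₂ * a₁) = -(X * Y * Y) := by
  -- absorption lemmas
  have eL : ∀ {i j : Fin 5} {x : R}, x = e i * x * e j → e i * x = x := by
    intro i j x hx
    conv_lhs => rw [hx]
    rw [← mul_assoc, ← mul_assoc, hidem]
    exact hx.symm
  have eR : ∀ {i j : Fin 5} {x : R}, x = e i * x * e j → x * e j = x := by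
    intro i j x hx
    conv_lhs => rw [hx]
    rw [mul_assoc, hidem]
    exact hx.symm
  -- α₁ = s₂ * b₂
  have ha₁α₁ : a₁ * α₁ = e 0 - a₂ * α₂ := by rw [← hsum]; abel
  have hα₁b : α₁ = s₂ * b₂ := by
    calc α₁ = e 1 * α₁ := (eL hα₁).symm
      _ = (s₂ * (b₂ * a₁)) * α₁ := by rw [hs₂l]
      _ = s₂ * (b₂ * (a₁ * α₁)) := by rw [mul_assoc, mul_assoc]
      _ = s₂ * (b₂ * e 0) - s₂ * (b₂ * (a₂ * α₂)) := by rw [ha₁α₁]; noncomm_ring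
      _ = s₂ * b₂ := by
          rw [eR hb₂, ← mul_assoc b₂, hba₂, zero_mul, mul_zero, sub_zero]
  -- u = b₃ a₂ b₂ a₁, v = b₄ a₂ b₂ a₁
  set u : R := b₃ * (a₂ * (b₂ * a₁)) with hud
  set v : R := b₄ * (a₂ * (b₂ * a₁)) with hvd
  have ha₃b₃ : a₃ * b₃ = -(a₁ * b₁) - a₂ * b₂ - a₄ * b₄ := by
    rw [← sub_eq_zero]
    rw [show a₃ * b₃ - (-(a₁ * b₁) - a₂ * b₂ - a₄ * b₄)
        = a₁ * b₁ + a₂ * b₂ + a₃ * b₃ + a₄ * b₄ from by abel]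
    exact hpre
  have ha₄b₄ : a₄ * b₄ = -(a₁ * b₁) - a₂ * b₂ - a₃ * b₃ := by
    rw [← sub_eq_zero]
    rw [show a₄ * b₄ - (-(a₁ * b₁) - a₂ * b₂ - a₃ * b₃)
        = a₁ * b₁ + a₂ * b₂ + a₃ * b₃ + a₄ * b₄ from by abel]
    exact hpre
  -- X*Y = -(s₂ * (α₂ * (a₄ * v)))
  have hXY : X * Y = -(s₂ * (α₂ * (a₄ * v))) := by
    have step1 : X * Y = s₂ * (α₂ * (a₃ * u)) := by
      rw [hX, hY]
      calc s₂ * (α₂ * a₃) * (b₃ * a₁) * (s₃ * (b₃ * a₂) * (b₂ * a₁))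
          = s₂ * (α₂ * ((a₃ * ((b₃ * a₁) * s₃)) * u)) := by
            rw [hud]; noncomm_ring
        _ = s₂ * (α₂ * (a₃ * u)) := by rw [hs₃r, eR ha₃]
    rw [step1]
    have : a₃ * u = (-(a₁ * b₁) - a₂ * b₂ - a₄ * b₄) * (a₂ * (b₂ * a₁)) := by
      rw [hud, ← mul_assoc, ha₃b₃]
    rw [this]
    have expand : α₂ * ((-(a₁ * b₁) - a₂ * b₂ - a₄ * b₄) * (a₂ * (b₂ * a₁)))
        = -((α₂ * a₁) * (b₁ * (a₂ * (b₂ * a₁))))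
          - (α₂ * a₂) * ((b₂ * a₂) * (b₂ * a₁))
          - (α₂ * (a₄ * v)) := by
      rw [hvd]; noncomm_ring
    rw [expand, hα₂a₁, hba₂]
    noncomm_ring
  -- v * s₃ = -(b₄ * a₃)
  have hvs₃ : v * s₃ = -(b₄ * a₃) := by
    have h0 : b₄ * ((a₁ * b₁ + a₂ * b₂ + a₃ * b₃ + a₄ * b₄) * (a₁ * s₃)) = 0 := by
      rw [hpre, zero_mul, mul_zero]
    have expand : b₄ * ((a₁ * b₁ + a₂ * b₂ + a₃ * b₃ + a₄ * b₄) * (a₁ * s₃))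
        = (b₄ * a₁) * ((b₁ * a₁) * s₃) + v * s₃
          + (b₄ * a₃) * ((b₃ * a₁) * s₃) + (b₄ * a₄) * (b₄ * (a₁ * s₃)) := by
      rw [hvd]; noncomm_ring
    rw [expand] at h0
    rw [hba₁, zero_mul, mul_zero, zero_add, hs₃r, eR (show b₄ * a₃ = e 4 * (b₄ * a₃) * e 3 from by
        rw [show e 4 * (b₄ * a₃) * e 3 = (e 4 * b₄) * (a₃ * e 3) from by noncomm_ring,
          eL hb₄, eR ha₃]), hba₄, zero_mul, add_zero] at h0
    exact eq_neg_of_add_eq_zero_left h0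
  have hYu : Y = s₃ * u := by rw [hY, hud]; noncomm_ring
  have hfin : X * Y * Y = -(α₁ * (a₃ * u)) := by
    calc X * Y * Y = (X * Y) * (s₃ * u) := by rw [hYu]
      _ = -(s₂ * (α₂ * (a₄ * ((v * s₃) * u)))) := by rw [hXY]; noncomm_ring
      _ = -(s₂ * (α₂ * (a₄ * (-(b₄ * a₃) * u)))) := by rw [hvs₃]
      _ = s₂ * (α₂ * ((a₄ * b₄) * (a₃ * u))) := by noncomm_ring
      _ = s₂ * (α₂ * ((-(a₁ * b₁) - a₂ * b₂ - a₃ * b₃) * (a₃ * u))) := by rw [ha₄b₄]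
      _ = -(s₂ * ((α₂ * a₁) * (b₁ * (a₃ * u)))) - s₂ * ((α₂ * a₂) * (b₂ * (a₃ * u)))
          - s₂ * (α₂ * (a₃ * ((b₃ * a₃) * u))) := by noncomm_ring
      _ = -(s₂ * (e 2 * (b₂ * (a₃ * u)))) := by rw [hα₂a₁, hα₂a₂, hba₃]; noncomm_ring
      _ = -((s₂ * b₂) * (a₃ * u)) := by rw [← mul_assoc (e 2), eL hb₂]; noncomm_ring
      _ = -(α₁ * (a₃ * u)) := by rw [hα₁b]
  rw [hfin, neg_neg, hud]
  noncomm_ring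
end

section
/- Let R be an associative unital ring, let 1 ≤ j ≤ i be integers, and let v₁, …, vᵢ and u_j, …, u_i be elements of R satisfying v_k u_k = u_{k−1} v_{k−1} for every k with j+1 ≤ k ≤ i. Then (v₁ v₂ ⋯ v_{i−1}) · (vᵢ uᵢ) = (v₁ v₂ ⋯ v_j) · u_j · (v_j v_{j+1} ⋯ v_{i−1}), where each product is taken left to right in increasing index order and an empty product equals 1. -/
/-- Gerbe-conjugation identity for the affine `Aₙ` preprojective relations: in an associative
unital ring `R`, if `v_k u_k = u_{k−1} v_{k−1}` for `j+1 ≤ k ≤ i` (with `1 ≤ j ≤ i`), then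
`(v₁⋯v_{i−1})·(vᵢuᵢ) = (v₁⋯v_j)·u_j·(v_j⋯v_{i−1})`, all products taken left to right in
increasing index order (empty products equal `1`). -/
theorem affineAn_gerbe_identity (R : Type*) [Ring R] (i j : ℕ) (hj : 1 ≤ j) (hji : j ≤ i)
    (u v : ℕ → R)
    (hrel : ∀ k, j + 1 ≤ k → k ≤ i → v k * u k = u (k - 1) * v (k - 1)) :
    ((List.range' 1 (i - 1)).map v).prod * (v i * u i) =
      ((List.range' 1 j).map v).prod * u j * ((List.range' j (i - j)).map v).prod := by
  revert hrel
  induction i, hji using Nat.le_induction with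
  | base =>
    intro hrel
    have h1 : j = (j - 1) + 1 := (Nat.succ_pred_eq_of_pos hj).symm
    rw [Nat.sub_self]
    conv_rhs => rw [h1, List.range'_concat]
    have : 1 + (j - 1) = j := by omega
    simp [this, Nat.sub_add_cancel hj, mul_assoc]
  | succ i hi IH =>
    intro hrel
    have hi1 : 1 ≤ i := le_trans hj hi
    have hIH := IH (fun k hk hk' => hrel k hk (by omega))
    have hr : v (i + 1) * u (i + 1) = u i * v i := by
      have := hrel (i + 1) (by omega) le_rfl
      simpa using this
    have e1 : i + 1 - 1 = (i - 1) + 1 := by omega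
    have e2 : i + 1 - j = (i - j) + 1 := by omega
    rw [e1, e2, List.range'_concat, List.range'_concat]
    have e3 : 1 + 1 * (i - 1) = i := by omega
    have e4 : j + 1 * (i - j) = i := by omega
    rw [e3, e4]
    simp only [List.map_append, List.map_cons, List.map_nil, List.prod_append,
      List.prod_cons, List.prod_nil, mul_one]
    rw [hr]
    calc ((List.range' 1 (i - 1)).map v).prod * v i * (u i * v i)
        = (((List.range' 1 (i - 1)).map v).prod * (v i * u i)) * v i := by simp [mul_assoc]
      _ = (((List.range' 1 j).map v).prod * u j * ((List.range' j (i - j)).map v).prod) * v i := by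
          rw [hIH]
      _ = _ := by simp [mul_assoc]
end

section
/- Let R be an associative unital ring, n ≥ 1, and let u₁, …, u_{n+1}, v₁, …, v_{n+1} ∈ R satisfy the cyclic relations v_k u_k = u_{k−1} v_{k−1} for all k = 1, …, n+1, with indices read modulo n+1 (so u₀ = u_{n+1} and v₀ = v_{n+1}). Then for every 1 ≤ i ≤ n, (u_{n+1} u_n ⋯ u_{i+1}) · (uᵢ vᵢ) = (v₁ u₁) · (u_{n+1} u_n ⋯ u_{i+1}), where the u-products are taken left to right in decreasing index order. -/
/-- For elements `u₁, …, u_{n+1}, v₁, …, v_{n+1}` of an associative unital ring `R`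
satisfying the cyclic affine `Aₙ` preprojective relations `v_k u_k = u_{k−1} v_{k−1}`
(indices mod `n+1`, so `u 0 = u (n+1)` and `v 0 = v (n+1)`), one has, for each `1 ≤ i ≤ n`,
`(u_{n+1} u_n ⋯ u_{i+1})·(uᵢvᵢ) = (v₁u₁)·(u_{n+1} u_n ⋯ u_{i+1})`, the `u`-products taken
left to right in decreasing index order. -/
theorem affineAn_cyclic_intertwine (R : Type*) [Ring R] (n : ℕ) (hn : 1 ≤ n)
    (u v : ℕ → R) (hu : u 0 = u (n + 1)) (hv : v 0 = v (n + 1))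
    (hrel : ∀ k, 1 ≤ k → k ≤ n + 1 → v k * u k = u (k - 1) * v (k - 1))
    (i : ℕ) (hi1 : 1 ≤ i) (hi2 : i ≤ n) :
    ((List.range' (i + 1) (n + 1 - i)).reverse.map u).prod * (u i * v i) =
      (v 1 * u 1) * ((List.range' (i + 1) (n + 1 - i)).reverse.map u).prod := by
  obtain ⟨d, hd⟩ : ∃ d, n - i = d := ⟨_, rfl⟩
  induction d generalizing i with
  | zero =>
    have : n = i := by omega
    subst this
    have hone : n + 1 - n = 1 := by omega
    rw [hone]
    simp only [List.range'_one, List.reverse_cons, List.reverse_nil, List.nil_append,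
      List.map_cons, List.map_nil, List.prod_cons, List.prod_nil, mul_one]
    have h1 := hrel (n + 1) (by omega) le_rfl
    simp only [Nat.add_sub_cancel] at h1
    have h2 := hrel 1 le_rfl (by omega)
    simp only [Nat.sub_self] at h2
    rw [← h1, h2, hu, hv, mul_assoc]
  | succ d ih =>
    have hm : n + 1 - i = (n + 1 - (i + 1)) + 1 := by omega
    rw [hm, List.range'_succ, List.reverse_cons, List.map_append, List.prod_append]
    simp only [List.map_cons, List.map_nil, List.prod_cons, List.prod_nil, mul_one]
    have hrelnext := hrel (i + 1) (by omega) (by omega)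
    simp only [Nat.add_sub_cancel] at hrelnext
    have key := ih (i + 1) (by omega) (by omega) (by omega)
    calc ((List.range' (i + 1 + 1) (n + 1 - (i + 1))).reverse.map u).prod * u (i + 1) *
          (u i * v i)
        = ((List.range' (i + 1 + 1) (n + 1 - (i + 1))).reverse.map u).prod *
            (u (i + 1) * v (i + 1)) * u (i + 1) := by rw [← hrelnext]; noncomm_ring
      _ = v 1 * u 1 * ((List.range' (i + 1 + 1) (n + 1 - (i + 1))).reverse.map u).prod *
            u (i + 1) := by rw [key]
      _ = v 1 * u 1 *
            (((List.range' (i + 1 + 1) (n + 1 - (i + 1))).reverse.map u).prod * u (i + 1)) := by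
          rw [mul_assoc]
end

section
/- Let R be an associative unital ring, n ≥ 1, and let u₁, …, u_{n+1}, v₁, …, v_{n+1} ∈ R satisfy the cyclic relations v_k u_k = u_{k−1} v_{k−1} for all k = 1, …, n+1, with indices read modulo n+1 (so u₀ = u_{n+1} and v₀ = v_{n+1}). Fix 1 ≤ i ≤ n and assume in addition that for each k with i+1 ≤ k ≤ n+1 the element u_k is invertible with two-sided inverse t_k. Set W := (v₁ v₂ ⋯ vᵢ)(t_{i+1} t_{i+2} ⋯ t_{n+1}), with both products taken left to right in increasing index order. Then (v₁u₁)·W = W·(v₁u₁) = (v₁ v₂ ⋯ v_{i+1})(t_{i+2} ⋯ t_{n+1}), where the t-product on the right is empty (equal to 1) when i = n. In particular, v₁u₁ commutes with W. -/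
/-- For elements `u₁, …, u_{n+1}, v₁, …, v_{n+1}` of an associative unital ring `R`
satisfying the cyclic affine `Aₙ` preprojective relations `v_k u_k = u_{k−1} v_{k−1}`
(indices mod `n+1`), fix `1 ≤ i ≤ n` and suppose each `u_k` for `i+1 ≤ k ≤ n+1` has a
two-sided inverse `t_k`.  Set `W = (v₁⋯vᵢ)(t_{i+1}⋯t_{n+1})` (products left to right in
increasing index order).  Then `(v₁u₁)·W = W·(v₁u₁) = (v₁⋯v_{i+1})(t_{i+2}⋯t_{n+1})`
(the last `t`-product being empty when `i = n`); in particular `v₁u₁` commutes with `W`. -/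
theorem affineAn_chart_intertwine (R : Type*) [Ring R] (n : ℕ) (hn : 1 ≤ n)
    (u v t : ℕ → R) (hu : u 0 = u (n + 1)) (hv : v 0 = v (n + 1))
    (hrel : ∀ k, 1 ≤ k → k ≤ n + 1 → v k * u k = u (k - 1) * v (k - 1))
    (i : ℕ) (hi1 : 1 ≤ i) (hi2 : i ≤ n)
    (hinv : ∀ k, i + 1 ≤ k → k ≤ n + 1 → u k * t k = 1 ∧ t k * u k = 1)
    (W : R)
    (hW : W = ((List.range' 1 i).map v).prod *
      ((List.range' (i + 1) (n + 1 - i)).map t).prod) :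
    (v 1 * u 1) * W = W * (v 1 * u 1) ∧
      W * (v 1 * u 1) = ((List.range' 1 (i + 1)).map v).prod *
        ((List.range' (i + 2) (n - i)).map t).prod := by
  -- single-step commuting lemma for t and v
  have hstep : ∀ k, i + 1 ≤ k → k + 1 ≤ n + 1 → t k * v (k + 1) = v k * t (k + 1) := by
    intro k hk1 hk2
    have h1 := (hinv (k + 1) (by omega) (by omega)).1
    have h2 := (hinv k hk1 (by omega)).2
    have h3 := hrel (k + 1) (by omega) hk2
    simp only [Nat.add_sub_cancel] at h3
    calc t k * v (k + 1)
        = t k * (v (k + 1) * u (k + 1) * t (k + 1)) := by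
          rw [mul_assoc (v (k + 1)), h1, mul_one]
      _ = t k * (u k * v k * t (k + 1)) := by rw [h3]
      _ = v k * t (k + 1) := by
          rw [← mul_assoc, ← mul_assoc, h2, one_mul]
  -- pushing u through a product of v's
  have lemA : ∀ m a, a + m ≤ n + 1 →
      u a * ((List.range' a m).map v).prod
        = ((List.range' (a + 1) m).map v).prod * u (a + m) := by
    intro m
    induction m with
    | zero => intro a _; simp
    | succ m ih =>
      intro a ha
      rw [List.range'_succ, List.range'_succ]
      simp only [List.map_cons, List.prod_cons]
      have h3 := hrel (a + 1) (by omega) (by omega)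
      simp only [Nat.add_sub_cancel] at h3
      rw [← mul_assoc, ← h3, mul_assoc, ih (a + 1) (by omega), ← mul_assoc]
      congr 1
      congr 1
      omega
  -- pushing v through a product of t's
  have lemB : ∀ m a, i + 1 ≤ a → a + m ≤ n + 1 →
      ((List.range' a m).map t).prod * v (a + m)
        = v a * ((List.range' (a + 1) m).map t).prod := by
    intro m
    induction m with
    | zero => intro a _ _; simp
    | succ m ih =>
      intro a ha1 ha2
      rw [List.range'_succ, List.range'_succ]
      simp only [List.map_cons, List.prod_cons]
      have hv' : a + (m + 1) = a + 1 + m := by omega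
      rw [hv', mul_assoc, ih (a + 1) (by omega) (by omega), ← mul_assoc,
        hstep a ha1 (by omega), mul_assoc]
  -- v1 u1 = u_{n+1} v_{n+1}
  have hrel1 : v 1 * u 1 = u (n + 1) * v (n + 1) := by
    have := hrel 1 le_rfl (by omega)
    simpa [hu, hv] using this
  have h1 : n + 1 - i = (n - i) + 1 := by omega
  have h2 : i + 1 + (n - i) = n + 1 := by omega
  -- the common right-hand side
  set RHS : R := ((List.range' 1 (i + 1)).map v).prod *
      ((List.range' (i + 2) (n - i)).map t).prod with hRHS
  have key2 : W * (v 1 * u 1) = RHS := by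
    rw [hW, hrel1, h1, List.range'_concat]
    rw [show i + 1 + 1 * (n - i) = n + 1 by omega]
    simp only [List.map_append, List.prod_append, List.map_cons, List.map_nil,
      List.prod_cons, List.prod_nil, mul_one]
    have hB := lemB (n - i) (i + 1) le_rfl (by omega)
    rw [h2] at hB
    have hi22 : i + 1 + 1 = i + 2 := rfl
    rw [hi22] at hB
    have htu := (hinv (n + 1) (by omega) le_rfl).2
    calc ((List.range' 1 i).map v).prod *
          (((List.range' (i + 1) (n - i)).map t).prod * t (n + 1)) *
          (u (n + 1) * v (n + 1))
        = ((List.range' 1 i).map v).prod *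
          (((List.range' (i + 1) (n - i)).map t).prod * (t (n + 1) * u (n + 1)) *
            v (n + 1)) := by
          simp only [mul_assoc]
      _ = ((List.range' 1 i).map v).prod *
          (((List.range' (i + 1) (n - i)).map t).prod * v (n + 1)) := by
          rw [htu, mul_one]
      _ = ((List.range' 1 i).map v).prod *
          (v (i + 1) * ((List.range' (i + 2) (n - i)).map t).prod) := by rw [hB]
      _ = RHS := by
          rw [hRHS, List.range'_concat]
          rw [show 1 + 1 * i = i + 1 by omega]
          simp only [List.map_append, List.prod_append, List.map_cons, List.map_nil,
            List.prod_cons, List.prod_nil, mul_one, mul_assoc]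
  have key1 : (v 1 * u 1) * W = RHS := by
    rw [hW, h1, List.range'_succ]
    simp only [List.map_cons, List.prod_cons]
    have hA := lemA i 1 (by omega)
    rw [show (1 : ℕ) + i = i + 1 by omega] at hA
    have hut := (hinv (i + 1) le_rfl (by omega)).1
    have hi22 : i + 1 + 1 = i + 2 := rfl
    calc v 1 * u 1 * (((List.range' 1 i).map v).prod *
          (t (i + 1) * ((List.range' (i + 2) (n - i)).map t).prod))
        = v 1 * (u 1 * ((List.range' 1 i).map v).prod) *
          (t (i + 1) * ((List.range' (i + 2) (n - i)).map t).prod) := by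
          simp only [mul_assoc]
      _ = v 1 * (((List.range' 2 i).map v).prod * u (i + 1)) *
          (t (i + 1) * ((List.range' (i + 2) (n - i)).map t).prod) := by rw [hA]
      _ = v 1 * ((List.range' 2 i).map v).prod *
          ((u (i + 1) * t (i + 1)) * ((List.range' (i + 2) (n - i)).map t).prod) := by
          simp only [mul_assoc]
      _ = v 1 * ((List.range' 2 i).map v).prod *
          ((List.range' (i + 2) (n - i)).map t).prod := by rw [hut, one_mul]
      _ = RHS := by
          rw [hRHS, List.range'_succ]
          simp only [List.map_cons, List.prod_cons, mul_assoc]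
  exact ⟨by rw [key1, key2], key2⟩
end
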